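/- arXiv:2406.08088 — 7 statements merged into one kernel-verified Lean document; each statement's English description precedes it below -/
import Mathlib

section
/- The space ℤAA(ℝ; X) of ℤ-almost automorphic functions with values in a Banach space X is a Banach space under the norm of uniform convergence: if f_k ∈ ℤAA(ℝ; X) converge uniformly on ℝ to f, then f ∈ ℤAA(ℝ; X). -/
/-!
In a complete space, existence of a limit along a filter passes to uniform limits (the limits of
the approximants form a Cauchy sequence, Moore–Osgood). This gives the left limits of `g`. For
almost automorphy, a diagonal subsequence of `s` works for all `f k` at once, with limit profiles
`G k`; these converge uniformly because `‖G k - G m‖∞ ≤ ‖f k - f m‖∞`, and passing to the uniform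
limit once more in each of the two limits gives the bi-limit property for `g`.
-/

open Filter Topology

variable {X : Type*} [NormedAddCommGroup X]

/-- `f ∈ PC_ℤ(ℝ; X)`: continuous on each `[n, n+1)`, `n ∈ ℤ`, with a left
limit at each integer. -/
def PCZ (f : ℝ → X) : Prop :=
  (∀ n : ℤ, ContinuousOn f (Set.Ico (n : ℝ) ((n : ℝ) + 1))) ∧
  ∀ n : ℤ, ∃ L : X, Filter.Tendsto f (nhdsWithin (n : ℝ) (Set.Iio (n : ℝ))) (nhds L)

/-- `f` is ℤ-almost automorphic: `f ∈ PC_ℤ(ℝ;X)` and for every sequence of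
integers there are a subsequence and a function `g` with the pointwise
bi-limit property. -/
def ZAA (f : ℝ → X) : Prop :=
  PCZ f ∧ ∀ s : ℕ → ℤ, ∃ (φ : ℕ → ℕ) (g : ℝ → X), StrictMono φ ∧
    (∀ t : ℝ, Filter.Tendsto (fun n => f (t + (s (φ n) : ℝ))) Filter.atTop (nhds (g t))) ∧
    (∀ t : ℝ, Filter.Tendsto (fun n => g (t - (s (φ n) : ℝ))) Filter.atTop (nhds (f t)))

section UniformLimits

variable {ι α γ β : Type*} [UniformSpace β] {F : ι → α → β} {f : α → β}

theorem TendstoUniformly.cauchySeq_of_tendsto [SemilatticeSup ι] [Nonempty ι] {L : ι → β}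
    {l : Filter α} [l.NeBot] (hF : TendstoUniformly F f atTop)
    (hL : ∀ i, Tendsto (F i) l (𝓝 (L i))) : CauchySeq L := by
  rw [cauchySeq_iff_tendsto, ← prod_atTop_atTop_eq]
  refine uniformity_hasBasis_closed.tendsto_right_iff.2 fun V ⟨hV, hVc⟩ => ?_
  filter_upwards [hF.tendstoUniformlyOn.uniformCauchySeqOn V hV] with ij hij
  exact hVc.mem_of_tendsto ((hL ij.1).prodMk_nhds (hL ij.2))
    (Eventually.of_forall fun x => hij x trivial)

theorem TendstoUniformly.exists_tendsto_of_tendsto [CompleteSpace β] [SemilatticeSup ι]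
    [Nonempty ι] {L : ι → β} {l : Filter α} [l.NeBot] (hF : TendstoUniformly F f atTop)
    (hL : ∀ i, Tendsto (F i) l (𝓝 (L i))) :
    ∃ ℓ, Tendsto L atTop (𝓝 ℓ) ∧ Tendsto f l (𝓝 ℓ) := by
  obtain ⟨ℓ, hℓ⟩ := cauchySeq_tendsto_of_complete (hF.cauchySeq_of_tendsto hL)
  exact ⟨ℓ, hℓ, hF.tendsto_of_eventually_tendsto (Eventually.of_forall hL) hℓ⟩

theorem TendstoUniformly.tendstoUniformly_of_tendsto {p : Filter ι} {G : ι → γ → β}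
    {g : γ → β} {l : γ → Filter α} [∀ t, (l t).NeBot] (hF : TendstoUniformly F f p)
    (hG : ∀ i t, Tendsto (F i) (l t) (𝓝 (G i t))) (hg : ∀ t, Tendsto f (l t) (𝓝 (g t))) :
    TendstoUniformly G g p := by
  intro U hU
  obtain ⟨V, ⟨hV, hVc⟩, hVU⟩ := uniformity_hasBasis_closed.mem_iff.1 hU
  filter_upwards [hF V hV] with i hi t
  exact hVU (hVc.mem_of_tendsto ((hg t).prodMk_nhds (hG i t)) (Eventually.of_forall hi))

end UniformLimits

theorem PCZ.of_tendstoUniformly [CompleteSpace X] {F : ℕ → ℝ → X} {f : ℝ → X}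
    (hF : TendstoUniformly F f atTop) (h : ∀ k, PCZ (F k)) : PCZ f :=
  ⟨fun n => hF.tendstoUniformlyOn.continuousOn (Eventually.of_forall fun k => (h k).1 n).frequently,
    fun n => by
      choose L hL using fun k => (h k).2 n
      obtain ⟨ℓ, -, hℓ⟩ := hF.exists_tendsto_of_tendsto hL
      exact ⟨ℓ, hℓ⟩⟩

section Extraction

def nestedExtraction (θ : ℕ → (ℕ → ℕ) → ℕ → ℕ) : ℕ → ℕ → ℕ
  | 0 => id
  | k + 1 => nestedExtraction θ k ∘ θ k (nestedExtraction θ k)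

variable {θ : ℕ → (ℕ → ℕ) → ℕ → ℕ} (hθ : ∀ k ψ, StrictMono (θ k ψ))
include hθ

theorem strictMono_nestedExtraction (k : ℕ) : StrictMono (nestedExtraction θ k) := by
  induction k with
  | zero => exact strictMono_id
  | succ k ih => exact ih.comp (hθ _ _)

theorem exists_nestedExtraction_eq_comp {k m : ℕ} (hkm : k ≤ m) :
    ∃ ρ, StrictMono ρ ∧ nestedExtraction θ m = nestedExtraction θ k ∘ ρ := by
  induction m, hkm using Nat.le_induction with
  | base => exact ⟨id, strictMono_id, rfl⟩
  | succ m _ ih =>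
    obtain ⟨ρ, hρ, hρeq⟩ := ih
    exact ⟨ρ ∘ θ m (nestedExtraction θ m), hρ.comp (hθ _ _), by
      rw [nestedExtraction, hρeq]; rfl⟩

theorem strictMono_nestedExtraction_diag : StrictMono fun n => nestedExtraction θ n n := by
  refine strictMono_nat_of_lt_succ fun n => ?_
  calc nestedExtraction θ n n < nestedExtraction θ n (n + 1) :=
        strictMono_nestedExtraction hθ n n.lt_succ_self
    _ ≤ nestedExtraction θ n (θ n (nestedExtraction θ n) (n + 1)) :=
        (strictMono_nestedExtraction hθ n).monotone (hθ _ _).le_apply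
    _ = nestedExtraction θ (n + 1) (n + 1) := rfl

theorem exists_tendsto_nestedExtraction_diag_eventuallyEq (k : ℕ) :
    ∃ j : ℕ → ℕ, Tendsto j atTop atTop ∧
      (fun n => nestedExtraction θ n n) =ᶠ[atTop] nestedExtraction θ k ∘ j := by
  have hdiag : ∀ n, k ≤ n → ∃ i, n ≤ i ∧ nestedExtraction θ n n = nestedExtraction θ k i :=
    fun n hn => by
      obtain ⟨ρ, hρ, hρeq⟩ := exists_nestedExtraction_eq_comp hθ hn
      exact ⟨ρ n, hρ.le_apply, congrFun hρeq n⟩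
  choose! j hj_ge hj_eq using hdiag
  exact ⟨j, tendsto_atTop_mono' atTop (eventually_ge_atTop k |>.mono hj_ge) tendsto_id,
    eventually_ge_atTop k |>.mono hj_eq⟩

end Extraction

/-- Cantor's diagonal argument. -/
theorem exists_extraction_forall_of_exists_extraction {α : Type*} {P : ℕ → (ℕ → α) → Prop}
    (hP : ∀ k s s' (j : ℕ → ℕ), Tendsto j atTop atTop → s' =ᶠ[atTop] s ∘ j → P k s → P k s')
    (hex : ∀ k s, ∃ φ : ℕ → ℕ, StrictMono φ ∧ P k (s ∘ φ)) (s : ℕ → α) :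
    ∃ φ : ℕ → ℕ, StrictMono φ ∧ ∀ k, P k (s ∘ φ) := by
  choose φ hφ hPφ using hex
  have hθ : ∀ k ψ, StrictMono (φ k (s ∘ ψ)) := fun k ψ => hφ k _
  refine ⟨_, strictMono_nestedExtraction_diag hθ, fun k => ?_⟩
  obtain ⟨j, hj, hdiag⟩ := exists_tendsto_nestedExtraction_diag_eventuallyEq hθ (k + 1)
  -- `P k` holds along `nestedExtraction _ (k + 1)` by construction.
  exact hP k _ _ j hj (hdiag.fun_comp s) (hPφ k (s ∘ nestedExtraction _ k))

def BiLimitAlong {E : Type*} [TopologicalSpace E] (f : ℝ → E) (s : ℕ → ℤ) (g : ℝ → E) :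
    Prop :=
  (∀ t : ℝ, Tendsto (fun n => f (t + s n)) atTop (𝓝 (g t))) ∧
    ∀ t : ℝ, Tendsto (fun n => g (t - s n)) atTop (𝓝 (f t))

theorem BiLimitAlong.of_eventuallyEq_comp {E : Type*} [TopologicalSpace E] {f g : ℝ → E}
    {s s' : ℕ → ℤ} {j : ℕ → ℕ} (h : BiLimitAlong f s g) (hj : Tendsto j atTop atTop)
    (hs : s' =ᶠ[atTop] s ∘ j) : BiLimitAlong f s' g :=
  ⟨fun t => ((h.1 t).comp hj).congr' (hs.mono fun n hn => by simp [hn]),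
    fun t => ((h.2 t).comp hj).congr' (hs.mono fun n hn => by simp [hn])⟩

theorem BiLimitAlong.exists_of_tendstoUniformly {E : Type*} [UniformSpace E] [CompleteSpace E]
    {F : ℕ → ℝ → E} {f : ℝ → E} {s : ℕ → ℤ} {G : ℕ → ℝ → E}
    (hF : TendstoUniformly F f atTop) (hG : ∀ k, BiLimitAlong (F k) s (G k)) :
    ∃ g, BiLimitAlong f s g := by
  have hfwd : ∀ t, ∃ ℓ, Tendsto (fun k => G k t) atTop (𝓝 ℓ) ∧
      Tendsto f (map (fun n => t + s n) atTop) (𝓝 ℓ) := fun t =>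
    hF.exists_tendsto_of_tendsto fun k => tendsto_map'_iff.2 ((hG k).1 t)
  choose g hGg hfg using hfwd
  have hGu : TendstoUniformly G g atTop :=
    hF.tendstoUniformly_of_tendsto (fun k t => tendsto_map'_iff.2 ((hG k).1 t)) hfg
  refine ⟨g, fun t => tendsto_map'_iff.1 (hfg t), fun t => tendsto_map'_iff.1 ?_⟩
  exact hGu.tendsto_of_eventually_tendsto
    (Eventually.of_forall fun k => tendsto_map'_iff.2 ((hG k).2 t)) (hF.tendsto_at t)

/-- `ℤAA(ℝ;X)` is a Banach space under the norm of uniform convergence: a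
uniform limit of ℤ-almost automorphic functions is ℤ-almost automorphic. -/
theorem stmt6 [CompleteSpace X] (f : ℕ → ℝ → X) (g : ℝ → X)
    (hf : ∀ k, ZAA (f k)) (hconv : TendstoUniformly f g atTop) : ZAA g := by
  refine ⟨PCZ.of_tendstoUniformly hconv fun k => (hf k).1, fun s => ?_⟩
  obtain ⟨φ, hφ, hbi⟩ := exists_extraction_forall_of_exists_extraction
    (P := fun k σ => ∃ G, BiLimitAlong (f k) σ G)
    (fun _ _ _ _ hj hσ ⟨G, hG⟩ => ⟨G, hG.of_eventuallyEq_comp hj hσ⟩)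
    (fun k σ => let ⟨φ, G, hφ, hG⟩ := (hf k).2 σ; ⟨φ, hφ, G, hG⟩) s
  choose G hG using hbi
  obtain ⟨g', hg'⟩ := BiLimitAlong.exists_of_tendstoUniformly hconv hG
  exact ⟨φ, g', hφ, hg'.1, hg'.2⟩
end

section
/- A function f : ℝ → X is compact almost automorphic if and only if it is ℤ-almost automorphic and uniformly continuous; i.e., KAA(ℝ; X) = ℤAA(ℝ; X) ∩ UC(ℝ; X). -/
/-!
If `f (· + aₙ)` converges uniformly on `[-1, 1]` to a limit `g`, then `g` is continuous there, so
`f (bₙ)` and `f (aₙ)` both tend to `g 0` whenever `bₙ - aₙ → 0`: compact almost automorphy forces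
uniform continuity. Conversely, split `sₙ = ⌊sₙ⌋ + rₙ` and pass to a subsequence with `rₙ → r`.
The translates of a uniformly continuous function are uniformly equicontinuous, so the integer
limit `g` of `f (· + ⌊sₙ⌋)` absorbs the perturbation `rₙ → r`, and `f (· + sₙ) → g (· + r)`
pointwise; for an equicontinuous family pointwise convergence is uniform on compact sets.
-/

open Filter Topology

variable {X : Type*} [NormedAddCommGroup X]

/-- `f : ℝ → X` is compact almost automorphic: continuous, and every real
sequence has a subsequence along which the translates converge, and the
back-translates converge back, uniformly on compact subsets of ℝ. -/
def KAA (f : ℝ → X) : Prop :=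
  Continuous f ∧ ∀ s : ℕ → ℝ, ∃ (φ : ℕ → ℕ) (g : ℝ → X), StrictMono φ ∧
    (∀ K : Set ℝ, IsCompact K →
      TendstoUniformlyOn (fun n t => f (t + s (φ n))) g Filter.atTop K) ∧
    (∀ K : Set ℝ, IsCompact K →
      TendstoUniformlyOn (fun n t => g (t - s (φ n))) f Filter.atTop K)

section Equicontinuity

variable {ι Y α : Type*} [TopologicalSpace Y] [UniformSpace α]

theorem EquicontinuousAt.tendsto_apply_of_tendsto {F : ι → Y → α} {x : Y} {y : α}
    {l : Filter ι} {u : ι → Y} (hF : EquicontinuousAt F x) (hx : Tendsto (F · x) l (𝓝 y))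
    (hu : Tendsto u l (𝓝 x)) : Tendsto (fun i => F i (u i)) l (𝓝 y) :=
  hx.congr_uniformity fun U hU => (hu.eventually (hF U hU)).mono fun i hi => hi i

theorem Equicontinuous.tendstoUniformlyOn_of_tendsto {F : ι → Y → α} {f : Y → α} {l : Filter ι}
    (hF : Equicontinuous F) (h : ∀ x, Tendsto (F · x) l (𝓝 (f x))) {K : Set Y}
    (hK : IsCompact K) : TendstoUniformlyOn F f l K := by
  have hcover : ⋃₀ {K : Set Y | IsCompact K} = Set.univ :=
    Set.eq_univ_of_forall fun x => ⟨{x}, isCompact_singleton, rfl⟩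
  have := (EquicontinuousOn.tendsto_uniformOnFun_iff_pi (fun _ hK => hK) hcover
    (fun K _ => hF.equicontinuousOn K) l f).2 (tendsto_pi_nhds.2 h)
  exact UniformOnFun.tendsto_iff_tendstoUniformlyOn.1 this K hK

theorem UniformContinuous.uniformEquicontinuous_comp_add {G : Type*} [UniformSpace G]
    [AddGroup G] [IsUniformAddGroup G] {f : G → α} (hf : UniformContinuous f) (s : ι → G) :
    UniformEquicontinuous fun i t => f (t + s i) := by
  intro U hU
  obtain ⟨V, hV, hVU⟩ := (uniformity_eq_comap_nhds_zero G ▸ hf hU :)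
  rw [uniformity_eq_comap_nhds_zero G]
  filter_upwards [preimage_mem_comap hV] with p hp i
  exact hVU (a := (p.1 + s i, p.2 + s i)) (by simpa [add_sub_add_right_eq_sub] using hp)

end Equicontinuity

theorem Continuous.pcz {f : ℝ → X} (hf : Continuous f) : PCZ f :=
  ⟨fun _ => hf.continuousOn, fun n => ⟨f n, hf.continuousWithinAt.tendsto⟩⟩

theorem KAA.zaa {f : ℝ → X} (hf : KAA f) : ZAA f := by
  refine ⟨hf.1.pcz, fun s => ?_⟩
  obtain ⟨φ, g, hφ, hfg, hgf⟩ := hf.2 fun n => (s n : ℝ)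
  exact ⟨φ, g, hφ, fun t => (hfg {t} isCompact_singleton).tendsto_at rfl,
    fun t => (hgf {t} isCompact_singleton).tendsto_at rfl⟩

theorem KAA.uniformContinuous {f : ℝ → X} (hf : KAA f) : UniformContinuous f := by
  refine tendsto_iff_seq_tendsto.2 fun p hp => tendsto_of_subseq_tendsto fun ns hns => ?_
  obtain ⟨φ, g, hφ, hfg, -⟩ := hf.2 fun n => (p (ns n)).1
  set K := Metric.closedBall (0 : ℝ) 1
  have h0K : (0 : ℝ) ∈ K := Metric.mem_closedBall_self zero_le_one
  have hgK := hfg K (isCompact_closedBall 0 1)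
  have hg : ContinuousWithinAt g K 0 :=
    hgK.continuousOn (Frequently.of_forall fun _ => (hf.1.comp (by fun_prop)).continuousOn) 0 h0K
  have hgap : Tendsto (fun n => (p (ns (φ n))).2 - (p (ns (φ n))).1) atTop (𝓝[K] 0) := by
    rw [nhdsWithin_eq_nhds.2 (Metric.closedBall_mem_nhds 0 one_pos)]
    rw [uniformity_eq_comap_nhds_zero ℝ, tendsto_comap_iff] at hp
    exact (hp.comp hns).comp hφ.tendsto_atTop
  have ha := hgK.tendsto_comp hg (tendsto_const_nhdsWithin h0K)
  have hb := hgK.tendsto_comp hg hgap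
  simp only [zero_add, sub_add_cancel] at ha hb
  exact ⟨φ, (ha.prodMk_nhds hb).mono_right (nhds_le_uniformity _)⟩

theorem ZAA.kaa_of_uniformContinuous {f : ℝ → X} (hZ : ZAA f) (hf : UniformContinuous f) :
    KAA f := by
  refine ⟨hf.continuous, fun s => ?_⟩
  obtain ⟨r, -, ψ, hψ, hr⟩ := isCompact_Icc.tendsto_subseq
    fun n => (⟨Int.fract_nonneg (s n), (Int.fract_lt_one (s n)).le⟩ : Int.fract (s n) ∈ Set.Icc 0 1)
  obtain ⟨φ, g, hφ, hfg, hgf⟩ := hZ.2 fun n => ⌊s (ψ n)⌋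
  have hr' : Tendsto (fun n => Int.fract (s (ψ (φ n)))) atTop (𝓝 r) := hr.comp hφ.tendsto_atTop
  have hg : UniformContinuous g :=
    (tendsto_pi_nhds.2 hfg).uniformContinuous_of_uniformEquicontinuous
      (hf.uniformEquicontinuous_comp_add _)
  have hgr : UniformContinuous fun t => g (t + r) :=
    hg.comp (uniformContinuous_id.add uniformContinuous_const)
  refine ⟨ψ ∘ φ, fun t => g (t + r), hψ.comp hφ, fun K hK => ?_, fun K hK => ?_⟩
  · refine (hf.uniformEquicontinuous_comp_add _).equicontinuous.tendstoUniformlyOn_of_tendsto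
      (fun t => ?_) hK
    have := ((hf.uniformEquicontinuous_comp_add fun n => (⌊s (ψ (φ n))⌋ : ℝ)).equicontinuous
      (t + r)).tendsto_apply_of_tendsto (hfg (t + r)) (tendsto_const_nhds.add hr')
    -- `f (t + sₙ) = f ((t + rₙ) + ⌊sₙ⌋)`
    refine this.congr fun n => ?_
    simp only [Function.comp_apply, Int.fract]
    ring_nf
  · have hgr' : UniformEquicontinuous fun n t => g (t - s (ψ (φ n)) + r) := by
      simpa only [sub_eq_add_neg] using hgr.uniformEquicontinuous_comp_add fun n => -s (ψ (φ n))
    refine hgr'.equicontinuous.tendstoUniformlyOn_of_tendsto (fun t => ?_) hK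
    have := ((hg.uniformEquicontinuous_comp_add fun n => -(⌊s (ψ (φ n))⌋ : ℝ)).equicontinuous
      t).tendsto_apply_of_tendsto (by simpa only [sub_eq_add_neg] using hgf t)
      (by simpa using (tendsto_const_nhds (x := t)).add ((tendsto_const_nhds (x := r)).sub hr'))
    -- `g (t - sₙ + r) = g ((t + (r - rₙ)) - ⌊sₙ⌋)`
    refine this.congr fun n => ?_
    simp only [Int.fract]
    ring_nf

/-- Characterization: `f` is compact almost automorphic iff `f` is ℤ-almost
automorphic and uniformly continuous, i.e. `KAA(ℝ;X) = ℤAA(ℝ;X) ∩ UC(ℝ;X)`. -/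
theorem stmt8 (f : ℝ → X) : KAA f ↔ ZAA f ∧ UniformContinuous f :=
  ⟨fun hf => ⟨hf.zaa, hf.uniformContinuous⟩, fun hf => hf.1.kaa_of_uniformContinuous hf.2⟩
end

section
/- If f ∈ ℤAA(ℝ; X) and lim_{t → +∞} f(t) = 0, then f ≡ 0. -/
open Filter Topology

variable {X : Type*} [NormedAddCommGroup X]

/-- A ℤ-almost automorphic function vanishing at `+∞` is identically zero. -/
theorem stmt9 (f : ℝ → X) (hf : ZAA f)
    (h0 : Filter.Tendsto f Filter.atTop (nhds 0)) : ∀ t : ℝ, f t = 0 := by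
  obtain ⟨-, hZ⟩ := hf
  obtain ⟨φ, g, hφ, h1, h2⟩ := hZ (fun n => (n : ℤ))
  have hsφ : Tendsto (fun n => ((φ n : ℤ) : ℝ)) atTop atTop := by
    have : Tendsto (fun n : ℕ => ((n : ℤ) : ℝ)) atTop atTop := by
      simp only [Int.cast_natCast]
      exact tendsto_natCast_atTop_atTop
    exact this.comp hφ.tendsto_atTop
  have hg : ∀ t : ℝ, g t = 0 := by
    intro t
    have : Tendsto (fun n => f (t + ((φ n : ℤ) : ℝ))) atTop (nhds 0) :=
      h0.comp (tendsto_atTop_add_const_left _ t hsφ)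
    exact tendsto_nhds_unique (h1 t) this
  intro t
  have h2t := h2 t
  simp only [hg] at h2t
  exact tendsto_nhds_unique h2t tendsto_const_nhds
end

section
/- The decomposition of an asymptotically ℤ-almost automorphic function is unique: ℤAAA(ℝ⁺; X) = ℤAA(ℝ; X) ⊕ ℤC₀(ℝ⁺; X), i.e., if g₁ + h₁ = g₂ + h₂ on ℝ⁺ with g_i ∈ ℤAA(ℝ; X) and h_i ∈ ℤC₀(ℝ⁺; X), then g₁ = g₂ on ℝ and h₁ = h₂ on ℝ⁺. -/
open Filter Topology

variable {X : Type*} [NormedAddCommGroup X]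

/-- `h ∈ ℤC₀(ℝ⁺;X)`: piecewise continuous on `[n, n+1)` for natural `n`, with
left limits at positive integers, and `h(t) → 0` as `t → ∞`. -/
def ZC0 (h : ℝ → X) : Prop :=
  (∀ n : ℕ, ContinuousOn h (Set.Ico (n : ℝ) ((n : ℝ) + 1))) ∧
  (∀ n : ℕ, 0 < n → ∃ L : X, Filter.Tendsto h (nhdsWithin (n : ℝ) (Set.Iio (n : ℝ))) (nhds L)) ∧
  Filter.Tendsto h Filter.atTop (nhds 0)

/-
If `g₁ + h₁ = g₂ + h₂` on `ℝ⁺`, then `g₁ - g₂ = h₂ - h₁` tends to `0` at `+∞`. Extracting one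
subsequence of integer shifts `c n → ∞` along which both `gᵢ` have the almost automorphic
bi-limit property, `g₁ - g₂` has it too, with limit function `G`. Then `G t = lim (g₁ - g₂)(t + c n)
= 0` for every `t`, hence `(g₁ - g₂) t = lim G (t - c n) = 0`.
-/

section BiLimit

variable {E : Type*} [TopologicalSpace E]

def HasBiLimitAlong (f : ℝ → E) (c : ℕ → ℝ) (G : ℝ → E) : Prop :=
  (∀ t, Tendsto (fun n => f (t + c n)) atTop (𝓝 (G t))) ∧
    ∀ t, Tendsto (fun n => G (t - c n)) atTop (𝓝 (f t))

theorem HasBiLimitAlong.comp_strictMono {f G : ℝ → E} {c : ℕ → ℝ}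
    (h : HasBiLimitAlong f c G) {ψ : ℕ → ℕ} (hψ : StrictMono ψ) :
    HasBiLimitAlong f (c ∘ ψ) G :=
  ⟨fun t => (h.1 t).comp hψ.tendsto_atTop, fun t => (h.2 t).comp hψ.tendsto_atTop⟩

theorem HasBiLimitAlong.sub [AddGroup E] [IsTopologicalAddGroup E] {f₁ f₂ G₁ G₂ : ℝ → E}
    {c : ℕ → ℝ} (h₁ : HasBiLimitAlong f₁ c G₁) (h₂ : HasBiLimitAlong f₂ c G₂) :
    HasBiLimitAlong (f₁ - f₂) c (G₁ - G₂) :=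
  ⟨fun t => (h₁.1 t).sub (h₂.1 t), fun t => (h₁.2 t).sub (h₂.2 t)⟩

theorem HasBiLimitAlong.eq_zero_of_tendsto_zero [Zero E] [T2Space E] {f G : ℝ → E}
    {c : ℕ → ℝ} (h : HasBiLimitAlong f c G) (hc : Tendsto c atTop atTop)
    (hf : Tendsto f atTop (𝓝 0)) : f = 0 := by
  have hG : G = 0 := funext fun t =>
    tendsto_nhds_unique (h.1 t) (hf.comp (tendsto_atTop_add_const_left _ t hc))
  subst hG
  exact funext fun t => tendsto_nhds_unique (h.2 t) tendsto_const_nhds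

end BiLimit

theorem ZAA.exists_hasBiLimitAlong {f : ℝ → X} (hf : ZAA f) (s : ℕ → ℤ) :
    ∃ (φ : ℕ → ℕ) (G : ℝ → X), StrictMono φ ∧ HasBiLimitAlong f (fun n => (s (φ n) : ℝ)) G :=
  hf.2 s

theorem ZAA.eq_of_tendsto_sub_atTop {f₁ f₂ : ℝ → X} (hf₁ : ZAA f₁) (hf₂ : ZAA f₂)
    (h : Tendsto (f₁ - f₂) atTop (𝓝 0)) : f₁ = f₂ := by
  obtain ⟨φ₁, G₁, hφ₁, hG₁⟩ := hf₁.exists_hasBiLimitAlong fun n => n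
  obtain ⟨φ₂, G₂, hφ₂, hG₂⟩ := hf₂.exists_hasBiLimitAlong fun n => φ₁ n
  have hc : Tendsto (fun n => ((φ₁ (φ₂ n) : ℤ) : ℝ)) atTop atTop :=
    tendsto_natCast_atTop_atTop.comp (hφ₁.comp hφ₂).tendsto_atTop
  exact sub_eq_zero.mp (((hG₁.comp_strictMono hφ₂).sub hG₂).eq_zero_of_tendsto_zero hc h)

/-- Uniqueness of the decomposition of asymptotically ℤ-almost automorphic
functions: `ℤAAA(ℝ⁺;X) = ℤAA(ℝ;X) ⊕ ℤC₀(ℝ⁺;X)`. -/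
theorem stmt10 (g₁ g₂ h₁ h₂ : ℝ → X)
    (hg₁ : ZAA g₁) (hg₂ : ZAA g₂) (hh₁ : ZC0 h₁) (hh₂ : ZC0 h₂)
    (heq : ∀ t : ℝ, 0 ≤ t → g₁ t + h₁ t = g₂ t + h₂ t) :
    (∀ t : ℝ, g₁ t = g₂ t) ∧ (∀ t : ℝ, 0 ≤ t → h₁ t = h₂ t) := by
  have hdiff : Tendsto (g₁ - g₂) atTop (𝓝 0) := by
    have hh : Tendsto (h₂ - h₁) atTop (𝓝 (0 - 0)) := hh₂.2.2.sub hh₁.2.2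
    rw [sub_zero] at hh
    refine hh.congr' ?_
    filter_upwards [eventually_ge_atTop 0] with t ht
    simp only [Pi.sub_apply, sub_eq_sub_iff_add_eq_add]
    rw [add_comm, heq t ht, add_comm]
  have hg : g₁ = g₂ := hg₁.eq_of_tendsto_sub_atTop hg₂ hdiff
  refine ⟨congrFun hg, fun t ht => ?_⟩
  exact add_left_cancel (hg ▸ heq t ht)
end

section
/- If f = g + h with g ∈ ℤAA(ℝ; X) and h ∈ ℤC₀(ℝ⁺; X), then the range of g on ℝ is contained in the closure of the range of f on ℝ⁺: {g(t) : t ∈ ℝ} ⊆ closure{f(t) : t ∈ ℝ⁺}. -/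
open Filter Topology

variable {X : Type*} [NormedAddCommGroup X]

/-- If `f = g + h` with `g ∈ ℤAA(ℝ;X)` and `h ∈ ℤC₀(ℝ⁺;X)`, then the range of
`g` is contained in the closure of the range of `f` on `ℝ⁺`. -/
theorem stmt11 (g h : ℝ → X) (hg : ZAA g) (hh : ZC0 h) :
    ∀ t : ℝ, g t ∈ closure ((fun s => g s + h s) '' Set.Ici (0 : ℝ)) := by
  intro t
  obtain ⟨φ, G, hφ, h1, h2⟩ := hg.2 (fun n => (n : ℤ))
  have hφtop : Tendsto (fun n : ℕ => ((φ n : ℕ) : ℝ)) atTop atTop :=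
    tendsto_natCast_atTop_atTop.comp hφ.tendsto_atTop
  have key : ∀ x : ℝ, G x ∈ closure ((fun s => g s + h s) '' Set.Ici (0 : ℝ)) := by
    intro x
    have hx : Tendsto (fun n : ℕ => x + (φ n : ℝ)) atTop atTop :=
      tendsto_atTop_add_const_left _ x hφtop
    have hlim : Tendsto (fun n : ℕ => g (x + (φ n : ℝ)) + h (x + (φ n : ℝ))) atTop
        (nhds (G x + 0)) := by
      have hg1 : Tendsto (fun n : ℕ => g (x + (φ n : ℝ))) atTop (nhds (G x)) := by
        have := h1 x
        simpa using this
      exact hg1.add ((hh.2.2).comp hx)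
    rw [add_zero] at hlim
    refine mem_closure_of_tendsto hlim ?_
    filter_upwards [hx.eventually_ge_atTop 0] with n hn
    exact Set.mem_image_of_mem _ hn
  have h2t : Tendsto (fun n : ℕ => G (t - (φ n : ℝ))) atTop (nhds (g t)) := by
    have := h2 t
    simpa using this
  exact isClosed_closure.mem_of_tendsto h2t
    (Filter.Eventually.of_forall fun n => key _)
end

section
/- If f = g + h is uniformly continuous on ℝ⁺, where g ∈ ℤAA(ℝ; X) and h ∈ ℤC₀(ℝ⁺; X), then g is uniformly continuous on ℝ. -/
open Filter Topology

variable {X : Type*} [NormedAddCommGroup X]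

/-- If `f = g + h` is uniformly continuous on `ℝ⁺`, with `g ∈ ℤAA(ℝ;X)` and
`h ∈ ℤC₀(ℝ⁺;X)`, then `g` is uniformly continuous on `ℝ`. -/
theorem stmt13 (g h : ℝ → X) (hg : ZAA g) (hh : ZC0 h)
    (hf : UniformContinuousOn (fun t => g t + h t) (Set.Ici (0 : ℝ))) :
    UniformContinuous g := by
  obtain ⟨φ, G, hφ, hG1, hG2⟩ := hg.2 (fun n => (n : ℤ))
  rw [Metric.uniformContinuous_iff]
  intro ε hε
  rw [Metric.uniformContinuousOn_iff] at hf
  obtain ⟨δ, hδ, hfδ⟩ := hf (ε/4) (by positivity)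
  refine ⟨δ, hδ, fun {a b} hab => ?_⟩
  have hφR : Tendsto (fun n => ((((fun n => (n : ℤ)) (φ n)) : ℤ) : ℝ)) atTop atTop := by
    simp only [Int.cast_natCast]
    exact tendsto_natCast_atTop_atTop.comp hφ.tendsto_atTop
  have hsmall : ∀ᶠ x : ℝ in atTop, ‖h x‖ < ε/8 :=
    (NormedAddCommGroup.tendsto_nhds_zero.mp hh.2.2) (ε/8) (by positivity)
  have key : ∀ t t' : ℝ, dist t t' < δ → dist (G t) (G t') ≤ ε/2 := by
    intro t t' htt
    refine le_of_tendsto ((hG1 t).dist (hG1 t')) ?_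
    have ht1 : Tendsto (fun n => t + ((((fun n => (n : ℤ)) (φ n)) : ℤ) : ℝ)) atTop atTop :=
      tendsto_atTop_add_const_left _ t hφR
    have ht2 : Tendsto (fun n => t' + ((((fun n => (n : ℤ)) (φ n)) : ℤ) : ℝ)) atTop atTop :=
      tendsto_atTop_add_const_left _ t' hφR
    filter_upwards [ht1.eventually_ge_atTop 0, ht2.eventually_ge_atTop 0,
      ht1.eventually hsmall, ht2.eventually hsmall] with n h0 h0' hn1 hn2
    set c : ℝ := ((((fun n => (n : ℤ)) (φ n)) : ℤ) : ℝ) with hc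
    have hdd : dist (t + c) (t' + c) < δ := by rwa [dist_add_right]
    have hF := hfδ (t + c) h0 (t' + c) h0' hdd
    have heq : g (t + c) - g (t' + c) =
        ((g (t + c) + h (t + c)) - (g (t' + c) + h (t' + c))) + (h (t' + c) - h (t + c)) := by
      abel
    calc dist (g (t + c)) (g (t' + c))
        = ‖g (t + c) - g (t' + c)‖ := dist_eq_norm _ _
      _ ≤ ‖(g (t + c) + h (t + c)) - (g (t' + c) + h (t' + c))‖
          + ‖h (t' + c) - h (t + c)‖ := by rw [heq]; exact norm_add_le _ _
      _ ≤ ‖(g (t + c) + h (t + c)) - (g (t' + c) + h (t' + c))‖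
          + (‖h (t' + c)‖ + ‖h (t + c)‖) := by
            gcongr
            exact norm_sub_le _ _
      _ ≤ ε/4 + (ε/8 + ε/8) := by
            have : ‖(g (t + c) + h (t + c)) - (g (t' + c) + h (t' + c))‖ < ε/4 := by
              simpa [dist_eq_norm] using hF
            have h1 := hn1.le
            have h2 := hn2.le
            gcongr
      _ = ε/2 := by ring
  have hfin : dist (g a) (g b) ≤ ε/2 := by
    refine le_of_tendsto ((hG2 a).dist (hG2 b)) (Eventually.of_forall fun n => ?_)
    exact key _ _ (by rw [dist_sub_right]; exact hab)
  linarith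
end

section
/- Every almost automorphic sequence S : ℤ → X extends to a compact almost automorphic function f : ℝ → X with f|_ℤ = S; explicitly, the piecewise linear interpolation f(t) = S(k) + (t−k)(S(k+1) − S(k)) for k ≤ t < k+1 is compact almost automorphic. -/
open Filter Topology

variable {X : Type*} [NormedAddCommGroup X]

/-- `S : ℤ → X` is a (discrete) almost automorphic sequence. -/
def AAZseq (S : ℤ → X) : Prop :=
  ∀ s : ℕ → ℤ, ∃ (φ : ℕ → ℕ) (T : ℤ → X), StrictMono φ ∧
    (∀ k : ℤ, Filter.Tendsto (fun n => S (k + s (φ n))) Filter.atTop (nhds (T k))) ∧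
    (∀ k : ℤ, Filter.Tendsto (fun n => T (k - s (φ n))) Filter.atTop (nhds (S k)))

/-!
Write a real shift as `s = ⌊s⌋ + fract s`. Linear interpolation commutes with integer shifts, and
since the interpolant on `[k, k + 1]` only depends on the values at `k` and `k + 1`, pointwise
convergence of sequences on `ℤ` gives locally uniform convergence of their interpolants. Along a
subsequence on which the fractional parts converge, the almost automorphy of `S` along the integer
parts thus turns into locally uniform convergence of the shifted interpolants; the remaining
convergent real shift is absorbed by the continuity of the limit.
-/

open Set
open scoped Uniformity

theorem TendstoLocallyUniformly.comp_add {ι α β : Type*} [TopologicalSpace α] [Add α]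
    [ContinuousAdd α] [UniformSpace β] {F : ι → α → β} {G : α → β} {l : Filter ι}
    {c : ι → α} {c₀ : α} (hF : TendstoLocallyUniformly F G l) (hG : Continuous G)
    (hc : Tendsto c l (𝓝 c₀)) :
    TendstoLocallyUniformly (fun n x => F n (x + c n)) (fun x => G (x + c₀)) l := by
  rw [tendstoLocallyUniformly_iff_forall_tendsto] at hF ⊢
  intro x
  have hmove : Tendsto (fun q : ι × α => q.2 + c q.1) (l ×ˢ 𝓝 x) (𝓝 (x + c₀)) :=
    tendsto_snd.add (hc.comp tendsto_fst)
  have hG_close : Tendsto (fun q : ι × α => (G (q.2 + c₀), G (q.2 + c q.1))) (l ×ˢ 𝓝 x) (𝓤 β) :=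
    (Tendsto.prodMk_nhds ((hG.tendsto _).comp (tendsto_snd.add_const c₀))
      ((hG.tendsto _).comp hmove)).mono_right (nhds_le_uniformity _)
  exact hG_close.uniformity_trans ((hF (x + c₀)).comp (tendsto_fst.prodMk hmove))

section LinearInterp

variable [NormedSpace ℝ X]

noncomputable def linearInterp (T : ℤ → X) (t : ℝ) : X :=
  T ⌊t⌋ + (t - ⌊t⌋) • (T (⌊t⌋ + 1) - T ⌊t⌋)

theorem linearInterp_intCast (T : ℤ → X) (n : ℤ) : linearInterp T n = T n := by
  simp [linearInterp]

theorem linearInterp_add_intCast (T : ℤ → X) (t : ℝ) (m : ℤ) :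
    linearInterp T (t + m) = linearInterp (fun k => T (k + m)) t := by
  simp only [linearInterp, Int.floor_add_intCast, Int.cast_add]
  rw [add_right_comm ⌊t⌋ m 1, add_sub_add_right_eq_sub]

theorem linearInterp_sub_intCast (T : ℤ → X) (t : ℝ) (m : ℤ) :
    linearInterp T (t - m) = linearInterp (fun k => T (k - m)) t := by
  simp only [linearInterp, Int.floor_sub_intCast, Int.cast_sub]
  rw [sub_add_eq_add_sub ⌊t⌋ m 1, sub_sub_sub_cancel_right]

theorem linearInterp_sub (A B : ℤ → X) (t : ℝ) :
    linearInterp A t - linearInterp B t = linearInterp (A - B) t := by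
  simp only [linearInterp, Pi.sub_apply]
  module

theorem norm_linearInterp_le (D : ℤ → X) (t : ℝ) :
    ‖linearInterp D t‖ ≤ ‖D ⌊t⌋‖ + ‖D (⌊t⌋ + 1)‖ := by
  have hθ₀ : 0 ≤ Int.fract t := Int.fract_nonneg t
  have hθ₁ : Int.fract t < 1 := Int.fract_lt_one t
  calc ‖linearInterp D t‖
      = ‖(1 - Int.fract t) • D ⌊t⌋ + Int.fract t • D (⌊t⌋ + 1)‖ := by
        rw [linearInterp, Int.self_sub_floor]
        congr 1
        module
    _ ≤ (1 - Int.fract t) * ‖D ⌊t⌋‖ + Int.fract t * ‖D (⌊t⌋ + 1)‖ := by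
        refine (norm_add_le _ _).trans_eq ?_
        rw [norm_smul, norm_smul, Real.norm_of_nonneg hθ₀, Real.norm_of_nonneg (by linarith)]
    _ ≤ ‖D ⌊t⌋‖ + ‖D (⌊t⌋ + 1)‖ := by
        nlinarith [norm_nonneg (D ⌊t⌋), norm_nonneg (D (⌊t⌋ + 1))]

theorem linearInterp_eqOn_Icc (T : ℤ → X) (n : ℤ) :
    EqOn (linearInterp T) (fun t => T n + (t - n) • (T (n + 1) - T n)) (Icc n (n + 1)) := by
  rintro t ⟨hnt, htn⟩
  rcases htn.lt_or_eq with htn | rfl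
  · simp [linearInterp, Int.floor_eq_iff.2 ⟨hnt, htn⟩]
  · rw [← Int.cast_one, ← Int.cast_add, linearInterp_intCast]
    simp

theorem continuousOn_linearInterp_Icc (T : ℤ → X) (n : ℤ) :
    ContinuousOn (linearInterp T) (Icc n (n + 1)) :=
  ContinuousOn.congr (by fun_prop) (linearInterp_eqOn_Icc T n)

theorem continuous_linearInterp (T : ℤ → X) : Continuous (linearInterp T) := by
  refine continuous_iff_continuousAt.2 fun t => continuousAt_iff_continuous_left_right.2 ⟨?_, ?_⟩
  · have ht : t ∈ Ioc ((⌈t⌉ - 1 : ℤ) : ℝ) ((⌈t⌉ - 1 : ℤ) + 1) := by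
      push_cast
      exact ⟨by linarith [Int.ceil_lt_add_one t], by linarith [Int.le_ceil t]⟩
    exact (continuousOn_linearInterp_Icc T _ t (Ioc_subset_Icc_self ht)).mono_of_mem_nhdsWithin
      (Icc_mem_nhdsLE_of_mem ht)
  · have ht : t ∈ Ico (⌊t⌋ : ℝ) (⌊t⌋ + 1) := ⟨Int.floor_le t, Int.lt_floor_add_one t⟩
    exact (continuousOn_linearInterp_Icc T _ t (Ico_subset_Icc_self ht)).mono_of_mem_nhdsWithin
      (Icc_mem_nhdsGE_of_mem ht)

variable {ι : Type*} {l : Filter ι} {A : ι → ℤ → X} {B : ℤ → X}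

theorem tendstoUniformlyOn_linearInterp_Icc (h : ∀ k, Tendsto (fun n => A n k) l (𝓝 (B k)))
    (a b : ℤ) : TendstoUniformlyOn (fun n => linearInterp (A n)) (linearInterp B) l (Icc a b) := by
  rw [Metric.tendstoUniformlyOn_iff]
  intro ε hε
  have hnear : ∀ᶠ n in l, ∀ k ∈ Finset.Icc a (b + 1), ‖(B - A n) k‖ < ε / 2 := by
    refine (Finset.eventually_all _).2 fun k _ => ?_
    simpa [dist_eq_norm'] using Metric.tendsto_nhds.1 (h k) (ε / 2) (half_pos hε)
  filter_upwards [hnear] with n hn t ⟨hat, htb⟩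
  have hfloor : a ≤ ⌊t⌋ ∧ ⌊t⌋ ≤ b :=
    ⟨Int.le_floor.2 hat, (Int.floor_le_floor htb).trans_eq (Int.floor_intCast b)⟩
  rw [dist_eq_norm, linearInterp_sub]
  refine (norm_linearInterp_le _ t).trans_lt ?_
  linarith [hn ⌊t⌋ (by simp only [Finset.mem_Icc]; omega),
    hn (⌊t⌋ + 1) (by simp only [Finset.mem_Icc]; omega)]

theorem tendstoLocallyUniformly_linearInterp (h : ∀ k, Tendsto (fun n => A n k) l (𝓝 (B k))) :
    TendstoLocallyUniformly (fun n => linearInterp (A n)) (linearInterp B) l := by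
  refine tendstoLocallyUniformly_of_forall_exists_nhds fun t =>
    ⟨Icc ((⌊t⌋ - 1 : ℤ) : ℝ) ((⌊t⌋ + 1 : ℤ) : ℝ), Icc_mem_nhds ?_ ?_,
      tendstoUniformlyOn_linearInterp_Icc h _ _⟩
  · push_cast
    linarith [Int.floor_le t]
  · push_cast
    exact Int.lt_floor_add_one t

theorem kaa_linearInterp {S : ℤ → X} (hS : AAZseq S) : KAA (linearInterp S) := by
  refine ⟨continuous_linearInterp S, fun s => ?_⟩
  obtain ⟨r, -, φ₁, hφ₁, hr⟩ := isCompact_Icc.tendsto_subseq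
    (fun n => ⟨Int.fract_nonneg (s n), (Int.fract_lt_one (s n)).le⟩ :
      ∀ n, Int.fract (s n) ∈ Icc (0 : ℝ) 1)
  obtain ⟨φ₂, T, hφ₂, hST, hTS⟩ := hS fun n => ⌊s (φ₁ n)⌋
  have hfract : Tendsto (fun n => Int.fract (s (φ₁ (φ₂ n)))) atTop (𝓝 r) :=
    hr.comp hφ₂.tendsto_atTop
  refine ⟨φ₁ ∘ φ₂, fun t => linearInterp T (t + r), hφ₁.comp hφ₂, fun K hK => ?_, fun K hK => ?_⟩
  · have hsplit : ∀ n t, t + s (φ₁ (φ₂ n)) = t + Int.fract (s (φ₁ (φ₂ n))) + ⌊s (φ₁ (φ₂ n))⌋ :=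
      fun n t => by rw [add_assoc, Int.fract_add_floor]
    simp only [Function.comp_apply, hsplit, linearInterp_add_intCast]
    exact tendstoLocallyUniformly_iff_forall_isCompact.1
      ((tendstoLocallyUniformly_linearInterp hST).comp_add (continuous_linearInterp T) hfract) K hK
  · have hsplit : ∀ n t, t - s (φ₁ (φ₂ n)) + r =
        t + (r - Int.fract (s (φ₁ (φ₂ n)))) - ⌊s (φ₁ (φ₂ n))⌋ :=
      fun n t => by linarith [Int.floor_add_fract (s (φ₁ (φ₂ n)))]
    have hshift : Tendsto (fun n => r - Int.fract (s (φ₁ (φ₂ n)))) atTop (𝓝 0) := by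
      simpa using (tendsto_const_nhds (x := r)).sub hfract
    have := (tendstoLocallyUniformly_linearInterp hTS).comp_add (continuous_linearInterp S) hshift
    simp only [add_zero] at this
    simp only [Function.comp_apply, hsplit, linearInterp_sub_intCast]
    exact tendstoLocallyUniformly_iff_forall_isCompact.1 this K hK

end LinearInterp

/-- Every almost automorphic sequence extends to a compact almost automorphic
function: the piecewise linear interpolation
`f(t) = S(⌊t⌋) + (t − ⌊t⌋)(S(⌊t⌋+1) − S(⌊t⌋))` is compact almost automorphic
and restricts to `S` on ℤ. -/
theorem stmt16 [NormedSpace ℝ X] (S : ℤ → X) (hS : AAZseq S)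
    (f : ℝ → X)
    (hfdef : ∀ t : ℝ, f t = S ⌊t⌋ + (t - (⌊t⌋ : ℝ)) • (S (⌊t⌋ + 1) - S ⌊t⌋)) :
    KAA f ∧ ∀ n : ℤ, f (n : ℝ) = S n := by
  obtain rfl : f = linearInterp S := funext hfdef
  exact ⟨kaa_linearInterp hS, linearInterp_intCast S⟩
end
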